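/- arXiv:2204.00647 — 4 statements merged into one kernel-verified Lean document; each statement's English description precedes it below -/
import Mathlib

section
/- Let n ≥ 1, L > 0, μ ≤ 0, and let f : ℝⁿ → ℝ belong to F_{μ,L} with f⋆ = inf f finite. Let x¹ ∈ ℝⁿ with f(x¹) > f⋆ (f is not minimized at x¹). Suppose there exist θ ∈ (0, 1) and μ_p > 0 such that the Łojasiewicz inequality (f(x) − f⋆)^{2θ} ≤ (1/(2μ_p))‖∇f(x)‖² holds for all x in the sublevel set X = {x : f(x) ≤ f(x¹)}. Then θ ≥ 1/2. -/
/-!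
Smoothness bounds the gradient by the gap: minimizing the quadratic upper model at `x` gives
`‖∇f x‖² ≤ 2 L (f x - f⋆)`. Since `f` is continuous on a connected space, it takes every value
`f⋆ + s` with `0 < s ≤ f x¹ - f⋆`, and there the Łojasiewicz inequality yields
`s ^ (2θ) ≤ (L / μₚ) s`. For `2θ < 1` this fails as `s → 0⁺`.
-/

open Set Filter Topology
open scoped RealInnerProductSpace

theorem ConvexOn.add_fderiv_sub_le {E : Type*} [NormedAddCommGroup E] [NormedSpace ℝ E]
    {g : E → ℝ} {g' : E →L[ℝ] ℝ} {x : E} (hg : ConvexOn ℝ univ g) (hd : HasFDerivAt g g' x)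
    (y : E) : g x + g' (y - x) ≤ g y := by
  have hline : ConvexOn ℝ univ (g ∘ AffineMap.lineMap (k := ℝ) x y) := by
    simpa using hg.comp_affineMap (AffineMap.lineMap (k := ℝ) x y)
  have hderiv : HasDerivAt (g ∘ AffineMap.lineMap (k := ℝ) x y) (g' (y - x)) 0 := by
    have hd0 : HasFDerivAt g g' (AffineMap.lineMap x y (0 : ℝ)) := by simpa using hd
    exact hd0.comp_hasDerivAt 0 AffineMap.hasDerivAt_lineMap
  have := hline.le_slope_of_hasDerivAt (mem_univ 0) (mem_univ 1) zero_lt_one hderiv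
  simp only [slope_def_field, Function.comp_apply, AffineMap.lineMap_apply_zero,
    AffineMap.lineMap_apply_one, sub_zero, div_one] at this
  linarith

section Smooth

variable {E : Type*} [NormedAddCommGroup E] [InnerProductSpace ℝ E]
  {f : E → ℝ} {f' : E → E} {L : ℝ}

theorem le_add_inner_add_sq_of_convexOn_sub [CompleteSpace E]
    (hgrad : ∀ x, HasGradientAt f (f' x) x)
    (hupper : ConvexOn ℝ univ (fun x => L / 2 * ‖x‖ ^ 2 - f x)) (x y : E) :
    f y ≤ f x + ⟪f' x, y - x⟫ + L / 2 * ‖y - x‖ ^ 2 := by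
  have hd := ((hasStrictFDerivAt_norm_sq x).hasFDerivAt.const_mul (L / 2)).sub
    (hasGradientAt_iff_hasFDerivAt.mp (hgrad x))
  have hfirst := hupper.add_fderiv_sub_le hd y
  simp only [sub_apply, smul_apply, innerSL_apply_apply,
    InnerProductSpace.toDual_apply_apply, smul_eq_mul, nsmul_eq_mul, Nat.cast_ofNat] at hfirst
  have hsq : ‖y‖ ^ 2 = ‖x‖ ^ 2 + 2 * ⟪x, y - x⟫ + ‖y - x‖ ^ 2 := by
    rw [← norm_add_sq_real, add_sub_cancel]
  rw [hsq] at hfirst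
  linarith

theorem sq_norm_le_of_le_add_inner_add_sq {m : ℝ} (hL : 0 < L)
    (hdesc : ∀ x y, f y ≤ f x + ⟪f' x, y - x⟫ + L / 2 * ‖y - x‖ ^ 2) (hm : ∀ y, m ≤ f y) (x : E) :
    ‖f' x‖ ^ 2 ≤ 2 * L * (f x - m) := by
  have hstep := hdesc x (x - L⁻¹ • f' x)
  rw [sub_sub_cancel_left, inner_neg_right, real_inner_smul_right, real_inner_self_eq_norm_sq,
    norm_neg, norm_smul, Real.norm_of_nonneg (inv_nonneg.2 hL.le)] at hstep
  have hquad : L / 2 * (L⁻¹ * ‖f' x‖) ^ 2 = L⁻¹ * ‖f' x‖ ^ 2 / 2 := by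
    field_simp
  have hgap : L⁻¹ * ‖f' x‖ ^ 2 / 2 ≤ f x - m := by
    linarith [hm (x - L⁻¹ • f' x)]
  rw [div_le_iff₀ two_pos, inv_mul_le_iff₀ hL] at hgap
  linarith

end Smooth

theorem exists_eq_of_isGLB_range {X : Type*} [TopologicalSpace X] [PreconnectedSpace X]
    {f : X → ℝ} {m c : ℝ} {b : X} (hf : Continuous f) (hm : IsGLB (range f) m) (hmc : m < c)
    (hcb : c ≤ f b) : ∃ x, f x = c := by
  obtain ⟨_, ⟨a, rfl⟩, -, hac⟩ := hm.exists_between hmc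
  exact intermediate_value_univ a b hf ⟨hac.le, hcb⟩

theorem one_le_of_rpow_le_mul {a p K : ℝ} (ha : 0 < a) (h : ∀ s ∈ Ioc 0 a, s ^ p ≤ K * s) :
    1 ≤ p := by
  by_contra! hp
  have hsmall : ∀ᶠ s in 𝓝[>] (0 : ℝ), s ∈ Ioo 0 a ∧ K < s ^ (p - 1) :=
    Eventually.and (Ioo_mem_nhdsGT ha)
      ((tendsto_rpow_neg_nhdsGT_zero (by linarith)).eventually_gt_atTop K)
  obtain ⟨s, ⟨hs0, hsa⟩, hK⟩ := hsmall.exists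
  have hsplit : s ^ p = s ^ (p - 1) * s := by
    rw [← Real.rpow_add_one hs0.ne', sub_add_cancel]
  have hle := h s ⟨hs0, hsa.le⟩
  rw [hsplit] at hle
  nlinarith

theorem stmt_6_general (n : ℕ)
    (f : EuclideanSpace ℝ (Fin n) → ℝ)
    (f' : EuclideanSpace ℝ (Fin n) → EuclideanSpace ℝ (Fin n))
    (L : ℝ) (hL : 0 < L)
    (hgrad : ∀ x, HasGradientAt f (f' x) x)
    (hupper : ConvexOn ℝ univ (fun x => L / 2 * ‖x‖ ^ 2 - f x))
    (fstar : ℝ) (hfstar : IsGLB (range f) fstar)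
    (x1 : EuclideanSpace ℝ (Fin n)) (hx1 : fstar < f x1)
    (θ μp : ℝ) (hμp : 0 < μp)
    (hLoj : ∀ x, f x ≤ f x1 →
      (f x - fstar) ^ (2 * θ) ≤ 1 / (2 * μp) * ‖f' x‖ ^ 2) :
    (1 : ℝ) / 2 ≤ θ := by
  have hgap : ∀ x, ‖f' x‖ ^ 2 ≤ 2 * L * (f x - fstar) :=
    sq_norm_le_of_le_add_inner_add_sq hL (le_add_inner_add_sq_of_convexOn_sub hgrad hupper)
      fun y => hfstar.1 ⟨y, rfl⟩
  have hcont : Continuous f := continuous_iff_continuousAt.2 fun x => (hgrad x).continuousAt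
  have hpow : ∀ s ∈ Ioc 0 (f x1 - fstar), s ^ (2 * θ) ≤ L / μp * s := by
    rintro s ⟨hs0, hs⟩
    obtain ⟨x, hx⟩ := exists_eq_of_isGLB_range hcont hfstar (lt_add_of_pos_right fstar hs0)
      (show fstar + s ≤ f x1 by linarith)
    calc s ^ (2 * θ) = (f x - fstar) ^ (2 * θ) := by rw [hx, add_sub_cancel_left]
      _ ≤ 1 / (2 * μp) * ‖f' x‖ ^ 2 := hLoj x (by linarith)
      _ ≤ 1 / (2 * μp) * (2 * L * s) := by
        gcongr
        simpa [hx] using hgap x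
      _ = L / μp * s := by field_simp
  linarith [one_le_of_rpow_le_mul (sub_pos.2 hx1) hpow]

theorem stmt_6 (n : ℕ) (hn : 1 ≤ n)
    (f : EuclideanSpace ℝ (Fin n) → ℝ)
    (f' : EuclideanSpace ℝ (Fin n) → EuclideanSpace ℝ (Fin n))
    (L μ : ℝ) (hL : 0 < L) (hμ : μ ≤ 0)
    (hgrad : ∀ x, HasGradientAt f (f' x) x)
    (hupper : ConvexOn ℝ univ (fun x => L / 2 * ‖x‖ ^ 2 - f x))
    (hlower : ConvexOn ℝ univ (fun x => f x - μ / 2 * ‖x‖ ^ 2))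
    (fstar : ℝ) (hfstar : IsGLB (range f) fstar)
    (x1 : EuclideanSpace ℝ (Fin n)) (hx1 : fstar < f x1)
    (θ μp : ℝ) (hθ : θ ∈ Ioo (0 : ℝ) 1) (hμp : 0 < μp)
    (hLoj : ∀ x, f x ≤ f x1 →
      (f x - fstar) ^ (2 * θ) ≤ 1 / (2 * μp) * ‖f' x‖ ^ 2) :
    (1 : ℝ) / 2 ≤ θ :=
  stmt_6_general n f f' L hL hgrad hupper fstar hfstar x1 hx1 θ μp hμp hLoj
end

section
/- Let n ≥ 1, L > 0, μ ≤ 0, and let f : ℝⁿ → ℝ belong to F_{μ,L} with f⋆ = inf f finite. Let x¹ ∈ ℝⁿ and suppose there exists γ ∈ [0, 1) such that every x̄ in the sublevel set X = {x : f(x) ≤ f(x¹)} satisfies f(x̄ − (1/L)∇f(x̄)) − f⋆ ≤ γ (f(x̄) − f⋆) (one-step linear contraction of gradient descent with step 1/L). Then f satisfies the PL inequality on X with constant μ_p = L²(1 − γ)/(2L − μ); that is, f(x) − f⋆ ≤ ((2L − μ)/(2L²(1 − γ)))‖∇f(x)‖² for all x ∈ X. -/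
/-!
Since `f - (μ/2)‖·‖²` is convex, `f` lies above the quadratic
`y ↦ f x + ⟪∇f x, y - x⟫ + (μ/2)‖y - x‖²`; evaluated at the gradient step `y = x - (1/L)∇f x`
this says one step decreases `f` by at most `(2L - μ)/(2L²)‖∇f x‖²`. The contraction hypothesis
says it decreases `f` by at least `(1 - γ)(f x - f⋆)`.
-/

open Set
open scoped RealInnerProductSpace

theorem ConvexOn.add_apply_sub_le_of_hasFDerivAt {E : Type*} [NormedAddCommGroup E]
    [NormedSpace ℝ E] {s : Set E} {g : E → ℝ} {D : E →L[ℝ] ℝ} {x y : E}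
    (hg : ConvexOn ℝ s g) (hx : x ∈ s) (hy : y ∈ s) (hD : HasFDerivAt g D x) :
    g x + D (y - x) ≤ g y := by
  set ℓ : ℝ →ᵃ[ℝ] E := AffineMap.lineMap x y
  have hℓ0 : ℓ 0 = x := AffineMap.lineMap_apply_zero x y
  have hℓ1 : ℓ 1 = y := AffineMap.lineMap_apply_one x y
  have hderiv : HasDerivAt (g ∘ ℓ) (D (y - x)) 0 :=
    (hℓ0.symm ▸ hD).comp_hasDerivAt 0 AffineMap.hasDerivAt_lineMap
  have h0 : (0 : ℝ) ∈ ℓ ⁻¹' s := by rwa [mem_preimage, hℓ0]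
  have h1 : (1 : ℝ) ∈ ℓ ⁻¹' s := by rwa [mem_preimage, hℓ1]
  have hslope := (hg.comp_affineMap ℓ).le_slope_of_hasDerivAt h0 h1 zero_lt_one hderiv
  rw [slope_def_field, Function.comp_apply, Function.comp_apply, hℓ0, hℓ1] at hslope
  linarith

section InnerProductSpace

variable {F : Type*} [NormedAddCommGroup F] [InnerProductSpace ℝ F] [CompleteSpace F]
  {f : F → ℝ} {f' : F} {μ : ℝ} {x : F}

theorem ConvexOn.add_inner_add_norm_sq_le
    (hconv : ConvexOn ℝ univ (fun z => f z - μ / 2 * ‖z‖ ^ 2)) (hf : HasGradientAt f f' x)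
    (y : F) : f x + ⟪f', y - x⟫ + μ / 2 * ‖y - x‖ ^ 2 ≤ f y := by
  have hD := hf.hasFDerivAt.sub ((hasStrictFDerivAt_norm_sq x).hasFDerivAt.const_smul (μ / 2))
  have key := hconv.add_apply_sub_le_of_hasFDerivAt (mem_univ x) (mem_univ y) hD
  have hexpand : ‖y‖ ^ 2 = ‖x‖ ^ 2 + 2 * ⟪x, y - x⟫ + ‖y - x‖ ^ 2 := by
    simpa using norm_add_sq_real x (y - x)
  simp only [sub_apply, smul_apply, InnerProductSpace.toDual_apply_apply, innerSL_apply_apply,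
    smul_eq_mul, nsmul_eq_mul, Nat.cast_ofNat, hexpand] at key
  linarith

theorem ConvexOn.sub_apply_sub_smul_le
    (hconv : ConvexOn ℝ univ (fun z => f z - μ / 2 * ‖z‖ ^ 2)) (hf : HasGradientAt f f' x)
    (t : ℝ) : f x - f (x - t • f') ≤ (t - μ / 2 * t ^ 2) * ‖f'‖ ^ 2 := by
  have h := hconv.add_inner_add_norm_sq_le hf (x - t • f')
  rw [sub_sub_cancel_left, inner_neg_right, real_inner_smul_right, real_inner_self_eq_norm_sq,
    norm_neg, norm_smul, mul_pow, Real.norm_eq_abs, sq_abs] at h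
  linarith

end InnerProductSpace

theorem stmt_7_general (n : ℕ)
    (f : EuclideanSpace ℝ (Fin n) → ℝ)
    (f' : EuclideanSpace ℝ (Fin n) → EuclideanSpace ℝ (Fin n))
    (L μ : ℝ) (hL : 0 < L)
    (hgrad : ∀ x, HasGradientAt f (f' x) x)
    (hlower : ConvexOn ℝ univ (fun x => f x - μ / 2 * ‖x‖ ^ 2))
    (fstar : ℝ)
    (x1 : EuclideanSpace ℝ (Fin n))
    (γ : ℝ) (hγ : γ ∈ Ico (0 : ℝ) 1)
    (hcontract : ∀ xb, f xb ≤ f x1 →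
      f (xb - (1 / L) • f' xb) - fstar ≤ γ * (f xb - fstar)) :
    ∀ x, f x ≤ f x1 →
      f x - fstar ≤ (2 * L - μ) / (2 * L ^ 2 * (1 - γ)) * ‖f' x‖ ^ 2 := by
  intro x hx
  set y := x - (1 / L) • f' x
  have hdescent : f x - f y ≤ (2 * L - μ) / (2 * L ^ 2) * ‖f' x‖ ^ 2 := by
    have hcoeff : 1 / L - μ / 2 * (1 / L) ^ 2 = (2 * L - μ) / (2 * L ^ 2) := by field_simp
    simpa only [hcoeff] using hlower.sub_apply_sub_smul_le (hgrad x) (1 / L)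
  have hcontract_x : f y - fstar ≤ γ * (f x - fstar) := hcontract x hx
  have hγ1 : 0 < 1 - γ := sub_pos.mpr hγ.2
  rw [← div_div, div_mul_eq_mul_div, le_div_iff₀ hγ1]
  linarith

theorem stmt_7 (n : ℕ) (hn : 1 ≤ n)
    (f : EuclideanSpace ℝ (Fin n) → ℝ)
    (f' : EuclideanSpace ℝ (Fin n) → EuclideanSpace ℝ (Fin n))
    (L μ : ℝ) (hL : 0 < L) (hμ : μ ≤ 0)
    (hgrad : ∀ x, HasGradientAt f (f' x) x)
    (hupper : ConvexOn ℝ univ (fun x => L / 2 * ‖x‖ ^ 2 - f x))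
    (hlower : ConvexOn ℝ univ (fun x => f x - μ / 2 * ‖x‖ ^ 2))
    (fstar : ℝ) (hfstar : IsGLB (range f) fstar)
    (x1 : EuclideanSpace ℝ (Fin n))
    (γ : ℝ) (hγ : γ ∈ Ico (0 : ℝ) 1)
    (hcontract : ∀ xb, f xb ≤ f x1 →
      f (xb - (1 / L) • f' xb) - fstar ≤ γ * (f xb - fstar)) :
    ∀ x, f x ≤ f x1 →
      f x - fstar ≤ (2 * L - μ) / (2 * L ^ 2 * (1 - γ)) * ‖f' x‖ ^ 2 :=
  stmt_7_general n f f' L μ hL hgrad hlower fstar x1 γ hγ hcontract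
end

section
/- Let n ≥ 1, L > 0, and let f : ℝⁿ → ℝ belong to F_{−L,L}. Assume the set X⋆ of global minimizers of f is nonempty, with minimum value f⋆, and that f has quadratic functional growth with constant μ_q ∈ (L/2, L) on the sublevel set X = {x : f(x) ≤ f(x¹)} of a point x¹ ∈ ℝⁿ. Let the gradient-descent iterates be defined by x^{k+1} = x^k − (1/L)∇f(x^k) for k = 1, …, N. Then f(x^{N+1}) − f⋆ ≤ (L/μ_q)(2 − 2μ_q/L)^N · (f(x¹) − f⋆). -/
/-! The (−L, L) curvature bounds, written at a minimizer `z` and at `x` and both evaluated at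
`(x + z)/2 + ∇f(x)/(2L)`, give
`⟪∇f x, x - z⟫ ≥ 2 (f x - f⋆) + ‖∇f x‖² / (2L) - (L/2) ‖x - z‖²`.
In the expansion of `‖x - ∇f(x)/L - z‖²` the gradient terms then cancel, leaving
`2 ‖x - z‖² - (4/L) (f x - f⋆)`. Taking `z` to be a nearest minimizer, quadratic growth turns
this into the contraction `d(x⁺)² ≤ (2 - 2μ_q/L) d(x)²` of the squared distance to `X⋆`; the
growth condition applies along the whole run because gradient steps decrease `f`. The function
gap is recovered at both ends through `f x - f⋆ ≤ (L/2) d(x)²` and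
`d(x¹)² ≤ (2/μ_q) (f x¹ - f⋆)`. -/

open Set
open scoped RealInnerProductSpace

theorem isClosed_setOf_forall_le {X α : Type*} [TopologicalSpace X] [TopologicalSpace α]
    [Preorder α] [OrderClosedTopology α] {f : X → α} (hf : Continuous f) :
    IsClosed {z | ∀ w, f z ≤ f w} := by
  rw [ofPred_forall]
  exact isClosed_iInter fun w => isClosed_le hf continuous_const

theorem exists_infDist_setOf_forall_le_eq_norm {F : Type*} [NormedAddCommGroup F]
    [ProperSpace F] {f : F → ℝ} (hf : Continuous f) {xs : F} (hxs : ∀ z, f xs ≤ f z) (y : F) :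
    ∃ z, (∀ w, f z ≤ f w) ∧ Metric.infDist y {z | ∀ w, f z ≤ f w} = ‖y - z‖ := by
  obtain ⟨z, hz, hdist⟩ := (isClosed_setOf_forall_le hf).exists_infDist_eq_dist ⟨xs, hxs⟩ y
  exact ⟨z, hz, hdist.trans (dist_eq_norm y z)⟩

section InnerProductSpace

variable {E : Type*} [NormedAddCommGroup E] [InnerProductSpace ℝ E] [CompleteSpace E]

theorem ConvexOn.add_inner_sub_le_of_hasGradientAt {g : E → ℝ} {g' x : E}
    (hg : ConvexOn ℝ univ g) (h : HasGradientAt g g' x) (y : E) :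
    g x + ⟪g', y - x⟫ ≤ g y := by
  set φ : ℝ → ℝ := fun t => g (AffineMap.lineMap x y t)
  have hφ : ConvexOn ℝ univ φ := hg.comp_affineMap _
  have hline : HasDerivAt (fun t : ℝ => AffineMap.lineMap x y t) (y - x) 0 := by
    simpa [AffineMap.lineMap_apply_module'] using
      ((hasDerivAt_id (0 : ℝ)).smul_const (y - x)).add_const x
  have hφ' : HasDerivAt φ ⟪g', y - x⟫ 0 := by
    have hF := hasGradientAt_iff_hasFDerivAt.mp h
    rw [← AffineMap.lineMap_apply_zero x y (k := ℝ)] at hF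
    simpa [φ, Function.comp_def] using hF.comp_hasDerivAt 0 hline
  have := hφ.le_slope_of_hasDerivAt (mem_univ 0) (mem_univ 1) one_pos hφ'
  simp only [slope_def_field, AffineMap.lineMap_apply_one, AffineMap.lineMap_apply_zero,
    sub_zero, div_one, φ] at this
  linarith

theorem HasGradientAt.sub_mul_norm_sq {f : E → ℝ} {f' x : E} (hf : HasGradientAt f f' x)
    (a : ℝ) : HasGradientAt (fun v => f v - a / 2 * ‖v‖ ^ 2) (f' - a • x) x := by
  rw [hasGradientAt_iff_hasFDerivAt] at hf ⊢
  refine (hf.sub ((hasStrictFDerivAt_norm_sq x).hasFDerivAt.const_mul (a / 2))).congr_fderiv ?_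
  ext v
  simp only [sub_apply, InnerProductSpace.toDual_apply_apply,
    smul_apply, coe_innerSL_apply, nsmul_eq_mul, Nat.cast_ofNat, smul_eq_mul,
    map_sub, map_smul, sub_right_inj]
  ring

theorem add_inner_add_sq_le_of_convexOn_sub_sq {f : E → ℝ} {f' x : E} {a : ℝ}
    (hf : HasGradientAt f f' x) (hconv : ConvexOn ℝ univ fun v => f v - a / 2 * ‖v‖ ^ 2)
    (y : E) : f x + ⟪f', y - x⟫ + a / 2 * ‖y - x‖ ^ 2 ≤ f y := by
  have h := hconv.add_inner_sub_le_of_hasGradientAt (hf.sub_mul_norm_sq a) y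
  have hy : ‖y‖ ^ 2 = ‖x‖ ^ 2 + 2 * ⟪x, y - x⟫ + ‖y - x‖ ^ 2 := by
    simpa using norm_add_sq_real x (y - x)
  rw [inner_sub_left, real_inner_smul_left, hy] at h
  linarith

theorem le_add_inner_add_sq_of_convexOn_sq_sub {f : E → ℝ} {f' x : E} {a : ℝ}
    (hf : HasGradientAt f f' x) (hconv : ConvexOn ℝ univ fun v => a / 2 * ‖v‖ ^ 2 - f v)
    (y : E) : f y ≤ f x + ⟪f', y - x⟫ + a / 2 * ‖y - x‖ ^ 2 := by
  have hconv' : ConvexOn ℝ univ fun v => (-f) v - (-a) / 2 * ‖v‖ ^ 2 :=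
    hconv.congr fun v _ => by simp only [Pi.neg_apply]; ring
  have hf' : HasGradientAt (-f) (-f') x := by
    rw [hasGradientAt_iff_hasFDerivAt, map_neg]
    exact hf.neg
  have := add_inner_add_sq_le_of_convexOn_sub_sq hf' hconv' y
  simp only [Pi.neg_apply, inner_neg_left] at this
  linarith

theorem HasGradientAt.eq_zero_of_forall_le {f : E → ℝ} {f' z : E} (hf : HasGradientAt f f' z)
    (hz : ∀ w, f z ≤ f w) : f' = 0 := by
  have h := IsLocalMin.hasFDerivAt_eq_zero (Filter.Eventually.of_forall hz) hf
  simpa using congrArg (InnerProductSpace.toDual ℝ E).symm h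

theorem differentiable_of_hasGradientAt {f : E → ℝ} {f' : E → E}
    (hf : ∀ x, HasGradientAt f (f' x) x) : Differentiable ℝ f :=
  fun x => (hf x).differentiableAt

noncomputable def gradientStep (f' : E → E) (L : ℝ) (x : E) : E := x - (1 / L) • f' x

variable {f : E → ℝ} {f' : E → E} {L : ℝ}

theorem le_inner_gradient_sub_of_gradient_eq_zero (hf : ∀ x, HasGradientAt f (f' x) x)
    (hL : 0 < L) (hupper : ConvexOn ℝ univ fun x => L / 2 * ‖x‖ ^ 2 - f x)
    (hlower : ConvexOn ℝ univ fun x => f x - (-L) / 2 * ‖x‖ ^ 2) {z : E} (hz : f' z = 0)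
    (x : E) :
    2 * (f x - f z) + ‖f' x‖ ^ 2 / (2 * L) - L / 2 * ‖x - z‖ ^ 2 ≤ ⟪f' x, x - z⟫ := by
  obtain ⟨u, hu⟩ : ∃ u : E, f' x = (2 * L) • u :=
    ⟨(2 * L)⁻¹ • f' x, by rw [smul_smul, mul_inv_cancel₀ (by positivity), one_smul]⟩
  set a : E := (1 / 2 : ℝ) • (x + z) + u
  have hup := le_add_inner_add_sq_of_convexOn_sq_sub (hf z) hupper a
  have hlow := add_inner_add_sq_le_of_convexOn_sub_sq (hf x) hlower a
  have hza : a - z = (1 / 2 : ℝ) • (x - z) + u := by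
    simp only [a, smul_add, smul_sub]; module
  have hxa : a - x = u - (1 / 2 : ℝ) • (x - z) := by
    simp only [a, smul_add, smul_sub]; module
  rw [hz, inner_zero_left, hza, norm_add_sq_real] at hup
  rw [hu, hxa, norm_sub_sq_real, inner_sub_right] at hlow
  have hnorm : ‖(2 * L) • u‖ ^ 2 / (2 * L) = 2 * L * ‖u‖ ^ 2 := by
    rw [norm_smul, mul_pow, Real.norm_eq_abs, sq_abs]
    field_simp
  rw [hu, hnorm]
  simp only [norm_smul, mul_pow, Real.norm_eq_abs, sq_abs, real_inner_smul_left,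
    real_inner_smul_right, real_inner_comm u, real_inner_self_eq_norm_sq] at hup hlow ⊢
  linarith

theorem apply_gradientStep_le (hf : ∀ x, HasGradientAt f (f' x) x) (hL : 0 < L)
    (hupper : ConvexOn ℝ univ fun x => L / 2 * ‖x‖ ^ 2 - f x) (x : E) :
    f (gradientStep f' L x) ≤ f x - ‖f' x‖ ^ 2 / (2 * L) := by
  have h := le_add_inner_add_sq_of_convexOn_sq_sub (hf x) hupper (gradientStep f' L x)
  have hstep : gradientStep f' L x - x = -(1 / L) • f' x := by
    simp only [gradientStep, neg_smul]; abel
  rw [hstep, inner_smul_right, real_inner_self_eq_norm_sq, norm_smul, mul_pow, Real.norm_eq_abs,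
    sq_abs] at h
  have hL' : L ≠ 0 := hL.ne'
  calc f (gradientStep f' L x)
      ≤ f x + -(1 / L) * ‖f' x‖ ^ 2 + L / 2 * ((-(1 / L)) ^ 2 * ‖f' x‖ ^ 2) := h
    _ = f x - ‖f' x‖ ^ 2 / (2 * L) := by field_simp; ring

theorem norm_gradientStep_sub_sq_le (hf : ∀ x, HasGradientAt f (f' x) x)
    (hL : 0 < L) (hupper : ConvexOn ℝ univ fun x => L / 2 * ‖x‖ ^ 2 - f x)
    (hlower : ConvexOn ℝ univ fun x => f x - (-L) / 2 * ‖x‖ ^ 2) {z : E} (hz : f' z = 0)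
    (x : E) :
    ‖gradientStep f' L x - z‖ ^ 2 ≤ 2 * ‖x - z‖ ^ 2 - 4 / L * (f x - f z) := by
  have key := le_inner_gradient_sub_of_gradient_eq_zero hf hL hupper hlower hz x
  have hstep : gradientStep f' L x - z = (x - z) - (1 / L) • f' x := by
    simp only [gradientStep]; abel
  rw [hstep, norm_sub_sq_real, real_inner_smul_right, norm_smul, mul_pow, Real.norm_eq_abs,
    sq_abs, real_inner_comm, ← sub_nonneg]
  have hL' : L ≠ 0 := hL.ne'
  have hgap : 2 * ‖x - z‖ ^ 2 - 4 / L * (f x - f z)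
      - (‖x - z‖ ^ 2 - 2 * (1 / L * ⟪f' x, x - z⟫) + (1 / L) ^ 2 * ‖f' x‖ ^ 2)
      = 2 / L * (⟪f' x, x - z⟫
        - (2 * (f x - f z) + ‖f' x‖ ^ 2 / (2 * L) - L / 2 * ‖x - z‖ ^ 2)) := by
    field_simp; ring
  rw [hgap]
  exact mul_nonneg (by positivity) (sub_nonneg.mpr key)

variable [ProperSpace E]

theorem sub_le_infDist_sq (hf : ∀ x, HasGradientAt f (f' x) x)
    (hupper : ConvexOn ℝ univ fun x => L / 2 * ‖x‖ ^ 2 - f x) {xs : E} (hxs : ∀ z, f xs ≤ f z)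
    (y : E) : f y - f xs ≤ L / 2 * Metric.infDist y {z | ∀ w, f z ≤ f w} ^ 2 := by
  obtain ⟨z, hz, hdist⟩ := exists_infDist_setOf_forall_le_eq_norm
    (differentiable_of_hasGradientAt hf).continuous hxs y
  have h := le_add_inner_add_sq_of_convexOn_sq_sub (hf z) hupper y
  rw [(hf z).eq_zero_of_forall_le hz, inner_zero_left, le_antisymm (hz xs) (hxs z)] at h
  rw [hdist]
  linarith

theorem infDist_gradientStep_sq_le (hf : ∀ x, HasGradientAt f (f' x) x)
    (hL : 0 < L) (hupper : ConvexOn ℝ univ fun x => L / 2 * ‖x‖ ^ 2 - f x)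
    (hlower : ConvexOn ℝ univ fun x => f x - (-L) / 2 * ‖x‖ ^ 2) {xs : E}
    (hxs : ∀ z, f xs ≤ f z) {μ : ℝ} {x : E}
    (hQG : μ / 2 * Metric.infDist x {z | ∀ w, f z ≤ f w} ^ 2 ≤ f x - f xs) :
    Metric.infDist (gradientStep f' L x) {z | ∀ w, f z ≤ f w} ^ 2
      ≤ (2 - 2 * μ / L) * Metric.infDist x {z | ∀ w, f z ≤ f w} ^ 2 := by
  set S := {z | ∀ w, f z ≤ f w}
  obtain ⟨z, hz, hdist⟩ := exists_infDist_setOf_forall_le_eq_norm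
    (differentiable_of_hasGradientAt hf).continuous hxs x
  have hstep :=
    norm_gradientStep_sub_sq_le hf hL hupper hlower ((hf z).eq_zero_of_forall_le hz) x
  have hnear : Metric.infDist (gradientStep f' L x) S ≤ ‖gradientStep f' L x - z‖ := by
    rw [← dist_eq_norm]; exact Metric.infDist_le_dist_of_mem hz
  rw [le_antisymm (hz xs) (hxs z)] at hstep
  rw [hdist] at hQG ⊢
  calc Metric.infDist (gradientStep f' L x) S ^ 2 ≤ ‖gradientStep f' L x - z‖ ^ 2 :=
        pow_le_pow_left₀ Metric.infDist_nonneg hnear 2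
    _ ≤ 2 * ‖x - z‖ ^ 2 - 4 / L * (f x - f xs) := hstep
    _ ≤ 2 * ‖x - z‖ ^ 2 - 4 / L * (μ / 2 * ‖x - z‖ ^ 2) := by gcongr
    _ = (2 - 2 * μ / L) * ‖x - z‖ ^ 2 := by ring

theorem infDist_sq_le_of_gradientStep (hf : ∀ x, HasGradientAt f (f' x) x)
    (hL : 0 < L) (hupper : ConvexOn ℝ univ fun x => L / 2 * ‖x‖ ^ 2 - f x)
    (hlower : ConvexOn ℝ univ fun x => f x - (-L) / 2 * ‖x‖ ^ 2) {xs : E}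
    (hxs : ∀ z, f xs ≤ f z) {μ : ℝ} (hμL : μ ≤ L) {N : ℕ} {y : ℕ → E}
    (hy : ∀ k < N, y (k + 1) = gradientStep f' L (y k))
    (hQG : ∀ v, f v ≤ f (y 0) →
      μ / 2 * Metric.infDist v {z | ∀ w, f z ≤ f w} ^ 2 ≤ f v - f xs) :
    Metric.infDist (y N) {z | ∀ w, f z ≤ f w} ^ 2
      ≤ (2 - 2 * μ / L) ^ N * Metric.infDist (y 0) {z | ∀ w, f z ≤ f w} ^ 2 := by
  have hdescent : ∀ k ≤ N, f (y k) ≤ f (y 0) := by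
    intro k hk
    induction k with
    | zero => rfl
    | succ k ih =>
      have hstep := apply_gradientStep_le hf hL hupper (y k)
      have : 0 ≤ ‖f' (y k)‖ ^ 2 / (2 * L) := by positivity
      rw [hy k hk]
      linarith [ih (by omega)]
  have hc : 0 ≤ 2 - 2 * μ / L := by
    rw [sub_nonneg, div_le_iff₀ hL]; linarith
  refine le_geom (u := fun k => Metric.infDist (y k) {z | ∀ w, f z ≤ f w} ^ 2) hc N
    fun k hk => ?_
  rw [hy k hk]
  exact infDist_gradientStep_sq_le hf hL hupper hlower hxs (hQG _ (hdescent k hk.le))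

end InnerProductSpace

theorem stmt_13_general (n : ℕ)
    (f : EuclideanSpace ℝ (Fin n) → ℝ)
    (f' : EuclideanSpace ℝ (Fin n) → EuclideanSpace ℝ (Fin n))
    (L : ℝ) (hL : 0 < L)
    (hgrad : ∀ x, HasGradientAt f (f' x) x)
    (hupper : ConvexOn ℝ univ (fun x => L / 2 * ‖x‖ ^ 2 - f x))
    (hlower : ConvexOn ℝ univ (fun x => f x - (-L) / 2 * ‖x‖ ^ 2))
    (xs : EuclideanSpace ℝ (Fin n)) (hxs : ∀ z, f xs ≤ f z)
    (μq : ℝ) (hμq : μq ∈ Ioo (L / 2) L)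
    (N : ℕ) (x : ℕ → EuclideanSpace ℝ (Fin n))
    (hiter : ∀ k, 1 ≤ k → k ≤ N → x (k + 1) = x k - (1 / L) • f' (x k))
    (hQF : ∀ y, f y ≤ f (x 1) →
      μq / 2 * (Metric.infDist y {z | ∀ w, f z ≤ f w}) ^ 2 ≤ f y - f xs) :
    f (x (N + 1)) - f xs ≤ L / μq * (2 - 2 * μq / L) ^ N * (f (x 1) - f xs) := by
  set S := {z | ∀ w, f z ≤ f w}
  set c := 2 - 2 * μq / L
  have hμ : 0 < μq := (half_pos hL).trans hμq.1
  have hc : 0 ≤ c := by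
    rw [sub_nonneg, div_le_iff₀ hL]; linarith [hμq.2]
  have hdist : Metric.infDist (x (N + 1)) S ^ 2 ≤ c ^ N * Metric.infDist (x 1) S ^ 2 :=
    infDist_sq_le_of_gradientStep (y := fun k => x (k + 1)) hgrad hL hupper hlower hxs hμq.2.le
      (fun k hk => hiter (k + 1) (by omega) hk) hQF
  have hstart : Metric.infDist (x 1) S ^ 2 ≤ 2 / μq * (f (x 1) - f xs) := by
    have := hQF (x 1) le_rfl
    rw [div_mul_eq_mul_div, le_div_iff₀ hμ]
    linarith
  calc f (x (N + 1)) - f xs ≤ L / 2 * Metric.infDist (x (N + 1)) S ^ 2 :=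
        sub_le_infDist_sq hgrad hupper hxs _
    _ ≤ L / 2 * (c ^ N * (2 / μq * (f (x 1) - f xs))) := by
        gcongr
        exact hdist.trans (mul_le_mul_of_nonneg_left hstart (pow_nonneg hc N))
    _ = L / μq * c ^ N * (f (x 1) - f xs) := by field_simp

theorem stmt_13 (n : ℕ) (hn : 1 ≤ n)
    (f : EuclideanSpace ℝ (Fin n) → ℝ)
    (f' : EuclideanSpace ℝ (Fin n) → EuclideanSpace ℝ (Fin n))
    (L : ℝ) (hL : 0 < L)
    (hgrad : ∀ x, HasGradientAt f (f' x) x)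
    (hupper : ConvexOn ℝ univ (fun x => L / 2 * ‖x‖ ^ 2 - f x))
    (hlower : ConvexOn ℝ univ (fun x => f x - (-L) / 2 * ‖x‖ ^ 2))
    (xs : EuclideanSpace ℝ (Fin n)) (hxs : ∀ z, f xs ≤ f z)
    (μq : ℝ) (hμq : μq ∈ Ioo (L / 2) L)
    (N : ℕ) (x : ℕ → EuclideanSpace ℝ (Fin n))
    (hiter : ∀ k, 1 ≤ k → k ≤ N → x (k + 1) = x k - (1 / L) • f' (x k))
    (hQF : ∀ y, f y ≤ f (x 1) →
      μq / 2 * (Metric.infDist y {z | ∀ w, f z ≤ f w}) ^ 2 ≤ f y - f xs) :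
    f (x (N + 1)) - f xs ≤ L / μq * (2 - 2 * μq / L) ^ N * (f (x 1) - f xs) :=
  stmt_13_general n f f' L hL hgrad hupper hlower xs hxs μq hμq N x hiter hQF
end

section
/- Let n ≥ 1, L > 0, and let f : ℝⁿ → ℝ belong to F_{−L,L}. Assume the set X⋆ of global minimizers of f is nonempty, with minimum value f⋆, and that f has quadratic functional growth with constant μ_q ∈ (L/2, L) on the sublevel set X = {x : f(x) ≤ f(x¹)} of a point x¹ ∈ ℝⁿ. Let the gradient-descent iterates be defined by x^{k+1} = x^k − (1/L)∇f(x^k) for k = 1, …, N. Then f(x^{N+1}) − f⋆ ≤ ( (2L² − 2(μ_q − L/2)²)/(2L² + (μ_q − L/2)²) )^N · (f(x¹) − f⋆). -/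
open Set
open scoped RealInnerProductSpace

/-!
A gradient step `z ↦ z - (1/L) ∇f z` decreases `f` by at least `‖∇f z‖² / (2L)`, so the iterates
stay in the sublevel set. Let `y` be a minimizer nearest to the current iterate `z`; then
`∇f y = 0`. Testing the quadratic lower bound at `z` and the quadratic upper bound at `y` against
a common point gives the interpolation inequality of `F_{-L,L}`, which with Cauchy–Schwarz reads
`4L (f z - f⋆) ≤ 2L ‖∇f z‖ ‖z - y‖ + L² ‖z - y‖² - ‖∇f z‖²`, while quadratic growth gives
`μ_q ‖z - y‖² ≤ 2 (f z - f⋆)`. Eliminating `‖z - y‖` bounds `f z - f⋆` by a multiple of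
`‖∇f z‖²`, and the guaranteed decrease becomes a contraction of `f - f⋆` by the stated rate.
-/

section InnerProductSpace

variable {E : Type*} [NormedAddCommGroup E] [InnerProductSpace ℝ E] [CompleteSpace E]
  {f : E → ℝ}

theorem ConvexOn.add_inner_le_of_hasGradientAt {g a : E} (hc : ConvexOn ℝ univ f)
    (hg : HasGradientAt f g a) (b : E) :
    f a + ⟪g, b - a⟫ ≤ f b := by
  let ℓ : ℝ →ᵃ[ℝ] E := AffineMap.lineMap a b
  have hℓ : HasDerivAt (f ∘ ℓ) ⟪g, b - a⟫ 0 := by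
    have hg' : HasFDerivAt f (InnerProductSpace.toDual ℝ E g) (ℓ 0) := by
      simpa [ℓ] using hg.hasFDerivAt
    simpa using hg'.comp_hasDerivAt (0 : ℝ) AffineMap.hasDerivAt_lineMap
  have := (hc.comp_affineMap ℓ).le_slope_of_hasDerivAt (mem_univ 0) (mem_univ 1) one_pos hℓ
  simpa [slope_def_field, ℓ, le_sub_iff_add_le'] using this

theorem HasGradientAt.sub_half_mul_norm_sq {g x : E} (hf : HasGradientAt f g x) (μ : ℝ) :
    HasGradientAt (fun y => f y - μ / 2 * ‖y‖ ^ 2) (g - μ • x) x := by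
  rw [hasGradientAt_iff_hasFDerivAt] at hf ⊢
  refine (hf.sub ((hasStrictFDerivAt_norm_sq x).hasFDerivAt.const_mul (μ / 2))).congr_fderiv ?_
  ext y
  simp only [sub_apply, InnerProductSpace.toDual_apply_apply,
    smul_apply, coe_innerSL_apply, nsmul_eq_mul, Nat.cast_ofNat, smul_eq_mul,
    map_sub, map_smul, sub_right_inj]
  ring

theorem add_inner_add_half_mul_norm_sq_le {g a : E} {μ : ℝ}
    (hc : ConvexOn ℝ univ (fun x => f x - μ / 2 * ‖x‖ ^ 2)) (hg : HasGradientAt f g a) (b : E) :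
    f a + ⟪g, b - a⟫ + μ / 2 * ‖b - a‖ ^ 2 ≤ f b := by
  have h := hc.add_inner_le_of_hasGradientAt (hg.sub_half_mul_norm_sq μ) b
  have hb : ‖b‖ ^ 2 = ‖a‖ ^ 2 + 2 * ⟪a, b - a⟫ + ‖b - a‖ ^ 2 := by
    simpa using norm_add_sq_real a (b - a)
  rw [inner_sub_left, real_inner_smul_left] at h
  linear_combination h - μ / 2 * hb

theorem le_add_inner_add_half_mul_norm_sq {g a : E} {L : ℝ}
    (hc : ConvexOn ℝ univ (fun x => L / 2 * ‖x‖ ^ 2 - f x)) (hg : HasGradientAt f g a) (b : E) :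
    f b ≤ f a + ⟪g, b - a⟫ + L / 2 * ‖b - a‖ ^ 2 := by
  have hneg : HasGradientAt (fun x => -f x) (-g) a := by
    rw [hasGradientAt_iff_hasFDerivAt, map_neg]
    exact hg.hasFDerivAt.neg
  have hc' : ConvexOn ℝ univ (fun x => -f x - (-L) / 2 * ‖x‖ ^ 2) := by
    convert hc using 2
    ring
  have := add_inner_add_half_mul_norm_sq_le hc' hneg b
  rw [inner_neg_left] at this
  linarith

theorem smooth_weaklyConvex_interpolation {ga gb a b : E} {L : ℝ} (hL : 0 < L)
    (hupper : ConvexOn ℝ univ (fun x => L / 2 * ‖x‖ ^ 2 - f x))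
    (hlower : ConvexOn ℝ univ (fun x => f x - (-L) / 2 * ‖x‖ ^ 2))
    (ha : HasGradientAt f ga a) (hb : HasGradientAt f gb b) :
    f a + ⟪ga, b - a⟫ - L / 2 * ‖b - a‖ ^ 2 + 1 / (4 * L) * ‖L • (b - a) + (gb - ga)‖ ^ 2
      ≤ f b := by
  set D := L • (b - a) + (gb - ga)
  -- compare the lower bound at `a` with the upper bound at `b` at the point `b - t • D`
  have key : ∀ t : ℝ,
      f a + ⟪ga, b - a⟫ - L / 2 * ‖b - a‖ ^ 2 + (t - L * t ^ 2) * ‖D‖ ^ 2 ≤ f b := by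
    intro t
    have hlo := add_inner_add_half_mul_norm_sq_le hlower ha (b - t • D)
    have hup := le_add_inner_add_half_mul_norm_sq hupper hb (b - t • D)
    rw [show b - t • D - a = (b - a) - t • D by abel, norm_sub_sq_real, inner_sub_right,
      real_inner_smul_right, real_inner_smul_right, norm_smul, mul_pow, Real.norm_eq_abs,
      sq_abs] at hlo
    rw [show b - t • D - b = -(t • D) by abel, norm_neg, inner_neg_right, real_inner_smul_right,
      norm_smul, mul_pow, Real.norm_eq_abs, sq_abs] at hup
    have hD : ‖D‖ ^ 2 = L * ⟪b - a, D⟫ + ⟪gb, D⟫ - ⟪ga, D⟫ :=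
      calc ‖D‖ ^ 2 = ⟪L • (b - a) + (gb - ga), D⟫ := (real_inner_self_eq_norm_sq D).symm
        _ = _ := by rw [inner_add_left, inner_sub_left, real_inner_smul_left]; ring
    linear_combination hlo + hup + t * hD
  convert key (1 / (2 * L)) using 3
  field_simp
  ring

theorem apply_sub_one_div_smul_le {g z : E} {L : ℝ} (hL : 0 < L)
    (hupper : ConvexOn ℝ univ (fun x => L / 2 * ‖x‖ ^ 2 - f x)) (hg : HasGradientAt f g z) :
    f (z - (1 / L) • g) ≤ f z - ‖g‖ ^ 2 / (2 * L) := by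
  have h := le_add_inner_add_half_mul_norm_sq hupper hg (z - (1 / L) • g)
  rw [sub_sub_cancel_left, inner_neg_right, real_inner_smul_right, real_inner_self_eq_norm_sq,
    norm_neg, norm_smul, mul_pow, Real.norm_eq_abs, sq_abs] at h
  have hL' := hL.ne'
  calc f (z - (1 / L) • g) ≤ f z + -(1 / L * ‖g‖ ^ 2) + L / 2 * ((1 / L) ^ 2 * ‖g‖ ^ 2) := h
    _ = f z - ‖g‖ ^ 2 / (2 * L) := by field_simp; ring

theorem HasGradientAt.eq_zero_of_forall_le_s14 {g y : E} (hg : HasGradientAt f g y)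
    (hy : ∀ w, f y ≤ f w) : g = 0 := by
  have hmin : IsLocalMin f y := Filter.Eventually.of_forall hy
  simpa using hmin.hasFDerivAt_eq_zero hg.hasFDerivAt

end InnerProductSpace

noncomputable def gradientDescentRate (L ν : ℝ) : ℝ :=
  (2 * L ^ 2 - 2 * ν ^ 2) / (2 * L ^ 2 + ν ^ 2)

theorem le_gradientDescentRate_mul {L μ s r Δ Δ' : ℝ} (hL : 0 < L) (hμ : μ ∈ Ioo (L / 2) L)
    (hinterp : 4 * L * Δ ≤ 2 * L * (s * r) + L ^ 2 * r ^ 2 - s ^ 2)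
    (hgrowth : μ / 2 * r ^ 2 ≤ Δ) (hdescent : Δ' ≤ Δ - s ^ 2 / (2 * L)) :
    Δ' ≤ gradientDescentRate L (μ - L / 2) * Δ := by
  obtain ⟨ν, rfl⟩ : ∃ ν, μ = L / 2 + ν := ⟨μ - L / 2, by ring⟩
  rw [add_sub_cancel_left]
  have hν : 0 < ν := by linarith [hμ.1]
  have hνL : ν < L / 2 := by linarith [hμ.2]
  have hsr : 2 * L * ν * r ^ 2 ≤ 2 * L * (s * r) - s ^ 2 := by nlinarith
  -- S-lemma: add `L / ν` times `hsr` to `hinterp` and complete the square in `r`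
  have hΔ : 6 * L * ν ^ 2 * Δ ≤ (2 * L ^ 2 + ν ^ 2) * s ^ 2 := by
    nlinarith [sq_nonneg (L * ν * r - (ν + L) * s),
      mul_nonneg (mul_nonneg (by linarith : (0 : ℝ) ≤ L - ν) (by linarith : (0 : ℝ) ≤ L - 2 * ν))
        (sq_nonneg s), mul_pos hL hν]
  have hq : 0 < 2 * L ^ 2 + ν ^ 2 := by positivity
  have hΔ' : 3 * ν ^ 2 * Δ ≤ (2 * L ^ 2 + ν ^ 2) * (s ^ 2 / (2 * L)) := by
    rw [mul_div_assoc', le_div_iff₀ (by positivity)]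
    linarith
  rw [gradientDescentRate, div_mul_eq_mul_div, le_div_iff₀ hq]
  linear_combination (2 * L ^ 2 + ν ^ 2) * hdescent + hΔ'

theorem gradient_step_sub_le_gradientDescentRate_mul {E : Type*} [NormedAddCommGroup E]
    [InnerProductSpace ℝ E] [CompleteSpace E] {f : E → ℝ} {f' : E → E} {L μ : ℝ}
    (hL : 0 < L) (hμ : μ ∈ Ioo (L / 2) L) (hgrad : ∀ x, HasGradientAt f (f' x) x)
    (hupper : ConvexOn ℝ univ (fun x => L / 2 * ‖x‖ ^ 2 - f x))
    (hlower : ConvexOn ℝ univ (fun x => f x - (-L) / 2 * ‖x‖ ^ 2))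
    {y z : E} (hy : f' y = 0) (hgrowth : μ / 2 * ‖z - y‖ ^ 2 ≤ f z - f y) :
    f (z - (1 / L) • f' z) - f y ≤ gradientDescentRate L (μ - L / 2) * (f z - f y) := by
  have hinterp := smooth_weaklyConvex_interpolation hL hupper hlower (hgrad z) (hgrad y)
  have hexp : ‖L • (y - z) + (f' y - f' z)‖ ^ 2
      = L ^ 2 * ‖z - y‖ ^ 2 + 2 * L * ⟪f' z, z - y⟫ + ‖f' z‖ ^ 2 := by
    rw [hy, zero_sub, ← sub_eq_add_neg, norm_sub_sq_real, norm_smul, mul_pow, Real.norm_eq_abs,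
      sq_abs, real_inner_smul_left, norm_sub_rev y z, ← neg_sub z y, inner_neg_left,
      real_inner_comm]
    ring
  rw [hexp, ← neg_sub z y, inner_neg_right, norm_neg] at hinterp
  refine le_gradientDescentRate_mul (s := ‖f' z‖) hL hμ ?_ hgrowth ?_
  · have h4 : 4 * L * (f z - f y) ≤ 2 * L * ⟪f' z, z - y⟫ + L ^ 2 * ‖z - y‖ ^ 2 - ‖f' z‖ ^ 2 := by
      have := mul_le_mul_of_nonneg_left hinterp (by positivity : (0 : ℝ) ≤ 4 * L)
      field_simp at this
      linarith
    nlinarith [mul_le_mul_of_nonneg_left (real_inner_le_norm (f' z) (z - y))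
      (by positivity : (0 : ℝ) ≤ 2 * L)]
  · linarith [apply_sub_one_div_smul_le hL hupper (hgrad z)]

theorem exists_forall_le_infDist_eq_norm {E : Type*} [NormedAddCommGroup E] [ProperSpace E]
    {f : E → ℝ} (hf : Continuous f) {xs : E} (hxs : ∀ w, f xs ≤ f w) (z : E) :
    ∃ y, (∀ w, f y ≤ f w) ∧ Metric.infDist z {y | ∀ w, f y ≤ f w} = ‖z - y‖ := by
  have hclosed : IsClosed {y | ∀ w, f y ≤ f w} := by
    simp only [ofPred_forall]
    exact isClosed_iInter fun w => isClosed_le hf continuous_const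
  obtain ⟨y, hy, hdist⟩ := hclosed.exists_infDist_eq_dist ⟨xs, hxs⟩ z
  exact ⟨y, hy, by rw [hdist, dist_eq_norm]⟩

theorem gradient_step_sub_min_le_gradientDescentRate_mul {E : Type*} [NormedAddCommGroup E]
    [InnerProductSpace ℝ E] [CompleteSpace E] [ProperSpace E] {f : E → ℝ} {f' : E → E} {L μ : ℝ}
    (hL : 0 < L) (hμ : μ ∈ Ioo (L / 2) L) (hgrad : ∀ x, HasGradientAt f (f' x) x)
    (hupper : ConvexOn ℝ univ (fun x => L / 2 * ‖x‖ ^ 2 - f x))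
    (hlower : ConvexOn ℝ univ (fun x => f x - (-L) / 2 * ‖x‖ ^ 2))
    {xs z : E} (hxs : ∀ w, f xs ≤ f w)
    (hgrowth : μ / 2 * Metric.infDist z {y | ∀ w, f y ≤ f w} ^ 2 ≤ f z - f xs) :
    f (z - (1 / L) • f' z) - f xs ≤ gradientDescentRate L (μ - L / 2) * (f z - f xs) := by
  have hcont : Continuous f := continuous_iff_continuousAt.2 fun z => (hgrad z).continuousAt
  obtain ⟨y, hy, hdist⟩ := exists_forall_le_infDist_eq_norm hcont hxs z
  rw [← le_antisymm (hy xs) (hxs y)] at hgrowth ⊢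
  exact gradient_step_sub_le_gradientDescentRate_mul hL hμ hgrad hupper hlower
    ((hgrad y).eq_zero_of_forall_le_s14 hy) (hdist ▸ hgrowth)

theorem stmt_14_general (n : ℕ)
    (f : EuclideanSpace ℝ (Fin n) → ℝ)
    (f' : EuclideanSpace ℝ (Fin n) → EuclideanSpace ℝ (Fin n))
    (L : ℝ) (hL : 0 < L)
    (hgrad : ∀ x, HasGradientAt f (f' x) x)
    (hupper : ConvexOn ℝ univ (fun x => L / 2 * ‖x‖ ^ 2 - f x))
    (hlower : ConvexOn ℝ univ (fun x => f x - (-L) / 2 * ‖x‖ ^ 2))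
    (xs : EuclideanSpace ℝ (Fin n)) (hxs : ∀ z, f xs ≤ f z)
    (μq : ℝ) (hμq : μq ∈ Ioo (L / 2) L)
    (N : ℕ) (x : ℕ → EuclideanSpace ℝ (Fin n))
    (hiter : ∀ k, 1 ≤ k → k ≤ N → x (k + 1) = x k - (1 / L) • f' (x k))
    (hQF : ∀ y, f y ≤ f (x 1) →
      μq / 2 * (Metric.infDist y {z | ∀ w, f z ≤ f w}) ^ 2 ≤ f y - f xs) :
    f (x (N + 1)) - f xs ≤
      ((2 * L ^ 2 - 2 * (μq - L / 2) ^ 2) / (2 * L ^ 2 + (μq - L / 2) ^ 2)) ^ N *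
        (f (x 1) - f xs) := by
  set ρ := gradientDescentRate L (μq - L / 2)
  have hρ : 0 ≤ ρ := div_nonneg (by nlinarith [hμq.1, hμq.2]) (by positivity)
  have hstep : ∀ z, f z ≤ f (x 1) → f (z - (1 / L) • f' z) ≤ f z ∧
      f (z - (1 / L) • f' z) - f xs ≤ ρ * (f z - f xs) := fun z hz =>
    ⟨(apply_sub_one_div_smul_le hL hupper (hgrad z)).trans (sub_le_self _ (by positivity)),
      gradient_step_sub_min_le_gradientDescentRate_mul hL hμq hgrad hupper hlower hxs (hQF z hz)⟩
  have hiterates : ∀ j ≤ N,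
      f (x (j + 1)) ≤ f (x 1) ∧ f (x (j + 1)) - f xs ≤ ρ ^ j * (f (x 1) - f xs) := by
    intro j
    induction j with
    | zero => simp
    | succ j ih =>
      intro hj
      obtain ⟨hsub, hrate⟩ := ih (by omega)
      obtain ⟨hdecr, hcontr⟩ := hiter (j + 1) (by omega) hj ▸ hstep _ hsub
      refine ⟨hdecr.trans hsub, hcontr.trans ?_⟩
      rw [pow_succ', mul_assoc]
      exact mul_le_mul_of_nonneg_left hrate hρ
  exact (hiterates N le_rfl).2

theorem stmt_14 (n : ℕ) (hn : 1 ≤ n)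
    (f : EuclideanSpace ℝ (Fin n) → ℝ)
    (f' : EuclideanSpace ℝ (Fin n) → EuclideanSpace ℝ (Fin n))
    (L : ℝ) (hL : 0 < L)
    (hgrad : ∀ x, HasGradientAt f (f' x) x)
    (hupper : ConvexOn ℝ univ (fun x => L / 2 * ‖x‖ ^ 2 - f x))
    (hlower : ConvexOn ℝ univ (fun x => f x - (-L) / 2 * ‖x‖ ^ 2))
    (xs : EuclideanSpace ℝ (Fin n)) (hxs : ∀ z, f xs ≤ f z)
    (μq : ℝ) (hμq : μq ∈ Ioo (L / 2) L)
    (N : ℕ) (x : ℕ → EuclideanSpace ℝ (Fin n))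
    (hiter : ∀ k, 1 ≤ k → k ≤ N → x (k + 1) = x k - (1 / L) • f' (x k))
    (hQF : ∀ y, f y ≤ f (x 1) →
      μq / 2 * (Metric.infDist y {z | ∀ w, f z ≤ f w}) ^ 2 ≤ f y - f xs) :
    f (x (N + 1)) - f xs ≤
      ((2 * L ^ 2 - 2 * (μq - L / 2) ^ 2) / (2 * L ^ 2 + (μq - L / 2) ^ 2)) ^ N *
        (f (x 1) - f xs) :=
  stmt_14_general n f f' L hL hgrad hupper hlower xs hxs μq hμq N x hiter hQF
end
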